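/- The lexicographical product G[G'] is a comparability graph if and only if both G and G' are comparability graphs; moreover in that case R^p(G[G']) = max{R^p(G), R^p(G')}. -/

import Mathlib

section Defs

variable {V : Type*}

/-- Two letters alternate in a word: the subword over `{a,b}` has no equal consecutive letters. -/
def Alternates [DecidableEq V] (w : List V) (a b : V) : Prop :=
  (w.filter (fun x => decide (x = a ∨ x = b))).Chain' (· ≠ ·)

/-- A word over the vertex set represents a graph: every vertex occurs, and two distinct
vertices are adjacent iff they alternate in the word. -/
def Represents [DecidableEq V] (w : List V) (G : SimpleGraph V) : Prop :=
  (∀ v : V, v ∈ w) ∧ ∀ a b : V, a ≠ b → (G.Adj a b ↔ Alternates w a b)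

def WordRepresentable [DecidableEq V] (G : SimpleGraph V) : Prop :=
  ∃ w : List V, Represents w G

/-- Every letter occurs exactly `k` times. -/
def IsKUniform [DecidableEq V] (w : List V) (k : ℕ) : Prop :=
  ∀ v : V, w.count v = k

/-- `k` is the representation number of `G`. -/
def RepNumIs [DecidableEq V] (G : SimpleGraph V) (k : ℕ) : Prop :=
  IsLeast {n : ℕ | ∃ w : List V, IsKUniform w n ∧ Represents w G} k

/-- `p` is a permutation of the vertex set (as a list). -/
def IsPermOn (p : List V) : Prop := p.Nodup ∧ ∀ v : V, v ∈ p

/-- `G` is representable by a concatenation of `k` permutations of its vertex set. -/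
def PermRepresents [DecidableEq V] (G : SimpleGraph V) (k : ℕ) : Prop :=
  ∃ ps : List (List V), ps.length = k ∧ (∀ p ∈ ps, IsPermOn p) ∧ Represents ps.flatten G

/-- `k` is the permutation-representation number of `G`. -/
def PrnIs [DecidableEq V] (G : SimpleGraph V) (k : ℕ) : Prop :=
  IsLeast {n : ℕ | PermRepresents G n} k

/-- A comparability graph: a graph admitting a transitive orientation of its edges. -/
def IsComparability (G : SimpleGraph V) : Prop :=
  ∃ lt : V → V → Prop, Transitive lt ∧ (∀ a b, lt a b → G.Adj a b) ∧
    (∀ a b, G.Adj a b → (lt a b ↔ ¬ lt b a))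

/-- A module: every outside vertex is adjacent to all of `M` or to none of `M`. -/
def IsModule (G : SimpleGraph V) (M : Set V) : Prop :=
  ∀ x ∉ M, (∀ m ∈ M, G.Adj x m) ∨ (∀ m ∈ M, ¬ G.Adj x m)

end Defs

/-- The graph obtained from `G` by replacing the vertex `a` with the module `M`. -/
def substGraph {W V' : Type*} (G : SimpleGraph W) (a : W) (M : SimpleGraph V') :
    SimpleGraph ({x : W // x ≠ a} ⊕ V') where
  Adj x y :=
    match x, y with
    | Sum.inl u, Sum.inl v => G.Adj u.1 v.1
    | Sum.inl u, Sum.inr _ => G.Adj u.1 a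
    | Sum.inr _, Sum.inl v => G.Adj a v.1
    | Sum.inr u, Sum.inr v => M.Adj u v
  symm := ⟨by
    rintro (u | u) (v | v) h
    · exact h.symm
    · exact h.symm
    · exact h.symm
    · exact h.symm⟩
  loopless := ⟨by
    rintro (u | u) h
    · exact G.irrefl h
    · exact M.irrefl h⟩

/-- The quotient graph of a modular partition: parts are adjacent iff completely adjacent. -/
def quotientGraph {V : Type*} (G : SimpleGraph V) {n : ℕ} (Mod : Fin n → Set V) :
    SimpleGraph (Fin n) where
  Adj i j := i ≠ j ∧ ∀ a ∈ Mod i, ∀ b ∈ Mod j, G.Adj a b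
  symm := ⟨by
    rintro i j ⟨hij, h⟩
    exact ⟨hij.symm, fun a ha b hb => (h b hb a ha).symm⟩⟩
  loopless := ⟨by rintro i ⟨h, _⟩; exact h rfl⟩

/-- The lexicographical product of two graphs. -/
def lexProd {V V' : Type*} (G : SimpleGraph V) (G' : SimpleGraph V') :
    SimpleGraph (V × V') where
  Adj x y := G.Adj x.1 y.1 ∨ (x.1 = y.1 ∧ G'.Adj x.2 y.2)
  symm := ⟨by
    rintro ⟨a, a'⟩ ⟨b, b'⟩ (h | ⟨h1, h2⟩)
    · exact Or.inl h.symm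
    · exact Or.inr ⟨h1.symm, h2.symm⟩⟩
  loopless := ⟨by
    rintro ⟨a, a'⟩ (h | ⟨_, h⟩)
    · exact G.irrefl h
    · exact G'.irrefl h⟩

/-!
An orientation of `G[G']` restricts to orientations of the copies `G × {v'}` and `{v} × G'`;
conversely, the lexicographic combination of transitive orientations of `G` and `G'` is a
transitive orientation of `G[G']`.

For `R^p`: restricting a word of `G[G']` to such a copy represents `G` (resp. `G'`) with as many
permutations. Conversely, repeating a permutation pads a representation by `k` permutations to
any `m ≥ k`, so `G` and `G'` are represented by `m = max k k'` permutations `pᵢ`, `qᵢ`; the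
lexicographically ordered products `pᵢ × qᵢ` then represent `G[G']`, since two vertices with
distinct first coordinates occur once per block in the order given by `pᵢ`, and two with equal
first coordinate in the order given by `qᵢ`.
-/

namespace List

variable {α β γ : Type*}

theorem isChain_ne_map_iff {f : α → β} {l : List α} (hf : Set.InjOn f {x | x ∈ l}) :
    (l.map f).IsChain (· ≠ ·) ↔ l.IsChain (· ≠ ·) := by
  rw [isChain_map]
  exact IsChain.iff_of_mem_imp fun _ _ ha hb => hf.ne_iff ha hb

theorem map_zip_eq_map_of_fst {l₁ : List α} {l₂ : List β} (hl : l₁.length ≤ l₂.length)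
    {f : α × β → γ} {g : α → γ} (hfg : ∀ x ∈ l₁.zip l₂, f x = g x.1) :
    (l₁.zip l₂).map f = l₁.map g := by
  rw [map_congr_left hfg, ← map_fst_zip hl, map_map, map_fst_zip hl]
  rfl

theorem map_zip_eq_map_of_snd {l₁ : List α} {l₂ : List β} (hl : l₂.length ≤ l₁.length)
    {f : α × β → γ} {g : β → γ} (hfg : ∀ x ∈ l₁.zip l₂, f x = g x.2) :
    (l₁.zip l₂).map f = l₂.map g := by
  rw [map_congr_left hfg, ← map_snd_zip hl, map_map, map_snd_zip hl]
  rfl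

variable [DecidableEq α] [DecidableEq β]

theorem filter_eq_singleton_of_nodup {l : List α} {a : α} (hl : l.Nodup)
    (ha : a ∈ l) : l.filter (fun x => decide (x = a)) = [a] := by
  rw [← perm_singleton]
  exact (perm_ext_iff_of_nodup (hl.filter _) (nodup_singleton a)).2 fun x => by
    simp only [mem_filter, decide_eq_true_eq, mem_singleton]
    exact ⟨And.right, fun h => ⟨h ▸ ha, h⟩⟩

theorem filter_eq_pair_or_of_nodup {l : List α} {a b : α} (hl : l.Nodup)
    (ha : a ∈ l) (hb : b ∈ l) (hab : a ≠ b) :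
    l.filter (fun x => decide (x = a ∨ x = b)) = [a, b] ∨
      l.filter (fun x => decide (x = a ∨ x = b)) = [b, a] := by
  rw [← perm_pair]
  exact (perm_ext_iff_of_nodup (hl.filter _) (by simp [hab])).2 fun x => by
    simp only [mem_filter, decide_eq_true_eq, mem_cons, not_mem_nil, or_false]
    exact ⟨And.right, fun h => ⟨h.elim (· ▸ ha) (· ▸ hb), h⟩⟩

theorem filter_product_of_ne {p : List α} {q : List β} {a b : α} {a' b' : β}
    (hq : q.Nodup) (ha' : a' ∈ q) (hb' : b' ∈ q) (hab : a ≠ b) :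
    (p ×ˢ q).filter (fun x => decide (x = (a, a') ∨ x = (b, b'))) =
      (p.filter (fun c => decide (c = a ∨ c = b))).map
        (fun c => (c, if c = a then a' else b')) := by
  induction p with
  | nil => rfl
  | cons c p ih =>
    rw [product_cons, filter_append, ih, filter_map, filter_cons]
    by_cases hca : c = a
    · subst hca
      simp [hab, Function.comp_def, filter_eq_singleton_of_nodup hq ha']
    · by_cases hcb : c = b
      · subst hcb
        simp [hca, Function.comp_def, filter_eq_singleton_of_nodup hq hb']
      · simp [hca, hcb, Function.comp_def]

theorem filter_product_of_eq {p : List α} {q : List β} {a : α} {a' b' : β}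
    (hp : p.Nodup) (ha : a ∈ p) :
    (p ×ˢ q).filter (fun x => decide (x = (a, a') ∨ x = (a, b'))) =
      (q.filter (fun y => decide (y = a' ∨ y = b'))).map (Prod.mk a) := by
  induction p with
  | nil => simp at ha
  | cons c p ih =>
    obtain ⟨hcp, hp⟩ := nodup_cons.1 hp
    rw [product_cons, filter_append, filter_map]
    by_cases hca : c = a
    · subst hca
      have hrest : (p ×ˢ q).filter (fun x => decide (x = (c, a') ∨ x = (c, b'))) = [] :=
        filter_eq_nil_iff.2 fun x hx hx' => by
          obtain rfl | rfl := of_decide_eq_true hx' <;> exact hcp (mem_product.1 hx).1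
      rw [hrest, append_nil]
      congr 1
      exact filter_congr fun y _ => by simp
    · rw [ih hp ((mem_cons.1 ha).resolve_left (Ne.symm hca)), filter_eq_nil_iff.2, map_nil,
        nil_append]
      simp [hca]

end List

section PermRepresentation

variable {V W : Type*} [DecidableEq V] [DecidableEq W]

theorem IsPermOn.alternates_append_self_append_iff {p w : List V} {a b : V} (hp : IsPermOn p)
    (hab : a ≠ b) : Alternates (p ++ (p ++ w)) a b ↔ Alternates (p ++ w) a b := by
  unfold Alternates List.Chain'
  rcases List.filter_eq_pair_or_of_nodup hp.1 (hp.2 a) (hp.2 b) hab with h | h <;>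
    simp only [List.filter_append, h, List.cons_append, List.nil_append,
      List.isChain_cons_cons, ne_eq, hab, Ne.symm hab, not_false_eq_true, true_and]

variable {G : SimpleGraph V} {n : ℕ}

theorem PermRepresents.pos [Nonempty V] (h : PermRepresents G n) : 0 < n := by
  obtain ⟨ps, rfl, -, hmem, -⟩ := h
  obtain ⟨p, hp, -⟩ := List.mem_flatten.1 (hmem (Classical.arbitrary V))
  exact List.length_pos_of_mem hp

theorem PermRepresents.succ (h : PermRepresents G n) (hn : 0 < n) :
    PermRepresents G (n + 1) := by
  obtain ⟨_ | ⟨p, ps⟩, rfl, hperm, hmem, hadj⟩ := h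
  · exact absurd hn (lt_irrefl 0)
  have hp : IsPermOn p := hperm p List.mem_cons_self
  refine ⟨p :: p :: ps, rfl, ?_, fun v => ?_, fun a b hab => ?_⟩
  · simpa using hperm
  · simpa using hmem v
  · simpa [hp.alternates_append_self_append_iff hab] using hadj a b hab

theorem PermRepresents.mono {m : ℕ} (h : PermRepresents G n) (hn : 0 < n) (hnm : n ≤ m) :
    PermRepresents G m := by
  induction m, hnm using Nat.le_induction with
  | base => exact h
  | succ m hm ih => exact ih.succ (hn.trans_le hm)

end PermRepresentation

section Restriction

variable {V W : Type*} [DecidableEq W] {e : V → W} {g : W → V}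

/-- The subword of the letters in the image of `e`, read back in `V` through the retraction `g`. -/
def restrictWord (e : V → W) (g : W → V) (w : List W) : List V :=
  (w.filter fun x => decide (e (g x) = x)).map g

theorem restrictWord_flatten (ws : List (List W)) :
    restrictWord e g ws.flatten = (ws.map (restrictWord e g)).flatten := by
  simp only [restrictWord, List.filter_flatten, List.map_flatten, List.map_map]
  rfl

theorem mem_restrictWord (hge : Function.LeftInverse g e) {w : List W} {v : V} :
    v ∈ restrictWord e g w ↔ e v ∈ w := by
  simp only [restrictWord, List.mem_map, List.mem_filter, decide_eq_true_eq]
  constructor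
  · rintro ⟨x, ⟨hx, hex⟩, rfl⟩
    rwa [hex]
  · exact fun hv => ⟨e v, ⟨hv, by rw [hge v]⟩, hge v⟩

theorem nodup_restrictWord {w : List W} (hw : w.Nodup) : (restrictWord e g w).Nodup := by
  refine (hw.filter _).map_on fun x hx y hy hxy => ?_
  rw [← of_decide_eq_true (List.mem_filter.1 hx).2, ← of_decide_eq_true (List.mem_filter.1 hy).2,
    hxy]

theorem alternates_restrictWord_iff [DecidableEq V] (hge : Function.LeftInverse g e) (w : List W)
    (a b : V) :
    Alternates (restrictWord e g w) a b ↔ Alternates w (e a) (e b) := by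
  unfold Alternates List.Chain' restrictWord
  have hfilter : ((w.filter fun x => decide (e (g x) = x)).filter
      ((fun v => decide (v = a ∨ v = b)) ∘ g)) = w.filter fun x => decide (x = e a ∨ x = e b) := by
    rw [List.filter_filter]
    refine List.filter_congr fun x _ => ?_
    rw [Bool.eq_iff_iff]
    simp only [Function.comp_apply, Bool.and_eq_true, decide_eq_true_eq]
    constructor
    · rintro ⟨rfl | rfl, hx⟩ <;> simp [hx]
    · rintro (rfl | rfl) <;> simp [hge a, hge b]
  rw [List.filter_map, hfilter]
  refine List.isChain_ne_map_iff fun x hx y hy hxy => ?_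
  have hfix : ∀ z ∈ w.filter fun x => decide (x = e a ∨ x = e b), e (g z) = z := by
    intro z hz
    obtain rfl | rfl : z = e a ∨ z = e b := by simpa using (List.mem_filter.1 hz).2
    all_goals rw [hge]
  rw [← hfix x hx, ← hfix y hy, hxy]

theorem PermRepresents.comap_of_leftInverse [DecidableEq V] {H : SimpleGraph W} {n : ℕ}
    (hge : Function.LeftInverse g e) (h : PermRepresents H n) : PermRepresents (H.comap e) n := by
  obtain ⟨ws, hlen, hperm, hmem, hadj⟩ := h
  refine ⟨ws.map (restrictWord e g), by rw [List.length_map, hlen], ?_, fun v => ?_,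
    fun a b hab => ?_⟩
  · simp only [List.mem_map]
    rintro _ ⟨w, hw, rfl⟩
    exact ⟨nodup_restrictWord (hperm w hw).1, fun v => (mem_restrictWord hge).2 ((hperm w hw).2 _)⟩
  · rw [← restrictWord_flatten, mem_restrictWord hge]
    exact hmem _
  · rw [← restrictWord_flatten, alternates_restrictWord_iff hge, SimpleGraph.comap_adj]
    exact hadj _ _ (hge.injective.ne hab)

end Restriction

section LexProd

variable {V V' : Type*} {G : SimpleGraph V} {G' : SimpleGraph V'}

theorem lexProd_adj {x y : V × V'} :
    (lexProd G G').Adj x y ↔ G.Adj x.1 y.1 ∨ (x.1 = y.1 ∧ G'.Adj x.2 y.2) :=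
  Iff.rfl

theorem lexProd_comap_mk_left (v' : V') : (lexProd G G').comap (fun a => (a, v')) = G := by
  ext a b
  simp [lexProd_adj]

theorem lexProd_comap_mk_right (v : V) : (lexProd G G').comap (Prod.mk v) = G' := by
  ext a b
  simp [lexProd_adj]

theorem IsComparability.comap {W : Type*} {H : SimpleGraph W} (h : IsComparability H)
    (f : V → W) : IsComparability (H.comap f) := by
  obtain ⟨lt, htr, hadj, hanti⟩ := h
  exact ⟨fun a b => lt (f a) (f b), fun _ _ _ => @htr _ _ _, fun a b => hadj (f a) (f b),
    fun a b => hanti (f a) (f b)⟩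

theorem IsComparability.lexProd (hG : IsComparability G) (hG' : IsComparability G') :
    IsComparability (lexProd G G') := by
  obtain ⟨lt, htr, hadj, hanti⟩ := hG
  obtain ⟨lt', htr', hadj', hanti'⟩ := hG'
  have : IsTrans V lt := ⟨fun _ _ _ => @htr _ _ _⟩
  have : IsTrans V' lt' := ⟨fun _ _ _ => @htr' _ _ _⟩
  have hirr : ∀ a, ¬ lt a a := fun a h => G.irrefl (hadj a a h)
  refine ⟨Prod.Lex lt lt', fun _ _ _ => Prod.Lex.trans, ?_, ?_⟩
  · rintro _ _ (⟨_, _, h⟩ | ⟨_, h⟩)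
    · exact Or.inl (hadj _ _ h)
    · exact Or.inr ⟨rfl, hadj' _ _ h⟩
  · rintro ⟨a, a'⟩ ⟨b, b'⟩ (h | ⟨rfl, h⟩)
    · have hab := G.ne_of_adj h
      simpa only [Prod.lex_def, hab, hab.symm, false_and, or_false] using hanti a b h
    · simpa only [Prod.lex_def, hirr, true_and, false_or] using hanti' a' b' h

theorem isComparability_lexProd_iff [Nonempty V] [Nonempty V'] :
    IsComparability (lexProd G G') ↔ IsComparability G ∧ IsComparability G' := by
  refine ⟨fun h => ⟨?_, ?_⟩, fun h => h.1.lexProd h.2⟩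
  · simpa only [lexProd_comap_mk_left] using h.comap (fun a => (a, Classical.arbitrary V'))
  · simpa only [lexProd_comap_mk_right] using h.comap (Prod.mk (Classical.arbitrary V))

variable [DecidableEq V] [DecidableEq V'] {n : ℕ}

theorem PermRepresents.of_lexProd_left [Nonempty V'] (h : PermRepresents (lexProd G G') n) :
    PermRepresents G n := by
  simpa only [lexProd_comap_mk_left] using
    h.comap_of_leftInverse (e := fun a => (a, Classical.arbitrary V')) (g := Prod.fst) fun _ => rfl

theorem PermRepresents.of_lexProd_right [Nonempty V] (h : PermRepresents (lexProd G G') n) :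
    PermRepresents G' n := by
  simpa only [lexProd_comap_mk_right] using
    h.comap_of_leftInverse (e := Prod.mk (Classical.arbitrary V)) (g := Prod.snd) fun _ => rfl

end LexProd

theorem IsPermOn.product {V V' : Type*} {p : List V} {q : List V'} (hp : IsPermOn p)
    (hq : IsPermOn q) : IsPermOn (p ×ˢ q) :=
  ⟨hp.1.product hq.1, fun _ => List.mem_product.2 ⟨hp.2 _, hq.2 _⟩⟩

section ProductPerms

variable {V V' : Type*} [DecidableEq V] [DecidableEq V'] {ps : List (List V)}
  {qs : List (List V')}

def productPerms (ps : List (List V)) (qs : List (List V')) : List (List (V × V')) :=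
  (ps.zip qs).map fun pq => pq.1 ×ˢ pq.2

theorem filter_flatten_productPerms_of_ne (hlen : ps.length = qs.length)
    (hqs : ∀ q ∈ qs, IsPermOn q) {a b : V} (a' b' : V') (hab : a ≠ b) :
    (productPerms ps qs).flatten.filter (fun x => decide (x = (a, a') ∨ x = (b, b'))) =
      (ps.flatten.filter fun c => decide (c = a ∨ c = b)).map
        (fun c => (c, if c = a then a' else b')) := by
  rw [productPerms, List.filter_flatten, List.map_map, List.filter_flatten, List.map_flatten,
    List.map_map, List.map_zip_eq_map_of_fst hlen.le]
  rintro ⟨p, q⟩ hpq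
  have hq := hqs q (List.of_mem_zip hpq).2
  exact List.filter_product_of_ne hq.1 (hq.2 a') (hq.2 b') hab

theorem filter_flatten_productPerms_of_eq (hlen : ps.length = qs.length)
    (hps : ∀ p ∈ ps, IsPermOn p) (a : V) (a' b' : V') :
    (productPerms ps qs).flatten.filter (fun x => decide (x = (a, a') ∨ x = (a, b'))) =
      (qs.flatten.filter fun y => decide (y = a' ∨ y = b')).map (Prod.mk a) := by
  rw [productPerms, List.filter_flatten, List.map_map, List.filter_flatten, List.map_flatten,
    List.map_map, List.map_zip_eq_map_of_snd hlen.ge]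
  rintro ⟨p, q⟩ hpq
  have hp := hps p (List.of_mem_zip hpq).1
  exact List.filter_product_of_eq hp.1 (hp.2 a)

theorem alternates_flatten_productPerms_of_ne (hlen : ps.length = qs.length)
    (hqs : ∀ q ∈ qs, IsPermOn q) {a b : V} (a' b' : V') (hab : a ≠ b) :
    Alternates (productPerms ps qs).flatten (a, a') (b, b') ↔ Alternates ps.flatten a b := by
  unfold Alternates List.Chain'
  rw [filter_flatten_productPerms_of_ne hlen hqs a' b' hab, List.isChain_ne_map_iff]
  exact fun x _ y _ h => congrArg Prod.fst h

theorem alternates_flatten_productPerms_of_eq (hlen : ps.length = qs.length)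
    (hps : ∀ p ∈ ps, IsPermOn p) (a : V) (a' b' : V') :
    Alternates (productPerms ps qs).flatten (a, a') (a, b') ↔ Alternates qs.flatten a' b' := by
  unfold Alternates List.Chain'
  rw [filter_flatten_productPerms_of_eq hlen hps, List.isChain_ne_map_iff]
  exact (Prod.mk_right_injective a).injOn

theorem PermRepresents.lexProd {G : SimpleGraph V} {G' : SimpleGraph V'} {n : ℕ}
    (hG : PermRepresents G n) (hG' : PermRepresents G' n) (hn : 0 < n) :
    PermRepresents (lexProd G G') n := by
  obtain ⟨ps, hplen, hps, -, hpadj⟩ := hG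
  obtain ⟨qs, hqlen, hqs, -, hqadj⟩ := hG'
  have hlen : ps.length = qs.length := hplen.trans hqlen.symm
  have hperms : ∀ r ∈ productPerms ps qs, IsPermOn r := by
    simp only [productPerms, List.mem_map]
    rintro _ ⟨⟨p, q⟩, hpq, rfl⟩
    exact (hps p (List.of_mem_zip hpq).1).product (hqs q (List.of_mem_zip hpq).2)
  have hrlen : (productPerms ps qs).length = n := by
    simp [productPerms, hplen, hqlen]
  refine ⟨productPerms ps qs, hrlen, hperms, fun x => ?_, ?_⟩
  · obtain ⟨r, hr⟩ := List.exists_mem_of_length_pos (hrlen ▸ hn)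
    exact List.mem_flatten.2 ⟨r, hr, (hperms r hr).2 x⟩
  rintro ⟨a, a'⟩ ⟨b, b'⟩ hne
  by_cases hab : a = b
  · subst hab
    have hab' : a' ≠ b' := fun h => hne (h ▸ rfl)
    simp only [lexProd_adj, SimpleGraph.irrefl, true_and, false_or]
    rw [hqadj a' b' hab', alternates_flatten_productPerms_of_eq hlen hps]
  · simp only [lexProd_adj, hab, false_and, or_false]
    rw [hpadj a b hab, alternates_flatten_productPerms_of_ne hlen hqs a' b' hab]

end ProductPerms

theorem stmt14_general {V V' : Type*} [DecidableEq V] [DecidableEq V']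
    [Nonempty V] [Nonempty V'] (G : SimpleGraph V) (G' : SimpleGraph V') :
    (IsComparability (lexProd G G') ↔ (IsComparability G ∧ IsComparability G')) ∧
    (∀ k k' : ℕ, PrnIs G k → PrnIs G' k' →
      PrnIs (lexProd G G') (max k k')) := by
  refine ⟨isComparability_lexProd_iff, fun k k' hk hk' => ⟨?_, fun n hn => ?_⟩⟩
  · exact (hk.1.mono hk.1.pos (le_max_left k k')).lexProd
      (hk'.1.mono hk'.1.pos (le_max_right k k')) (hk.1.pos.trans_le (le_max_left k k'))
  · exact max_le (hk.2 hn.of_lexProd_left) (hk'.2 hn.of_lexProd_right)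

/-- `G[G']` is a comparability graph iff both `G` and `G'` are; moreover in
that case `R^p(G[G']) = max {R^p(G), R^p(G')}`. -/
theorem stmt14 {V V' : Type*} [DecidableEq V] [DecidableEq V'] [Fintype V] [Fintype V']
    [Nonempty V] [Nonempty V'] (G : SimpleGraph V) (G' : SimpleGraph V') :
    (IsComparability (lexProd G G') ↔ (IsComparability G ∧ IsComparability G')) ∧
    (∀ k k' : ℕ, PrnIs G k → PrnIs G' k' →
      PrnIs (lexProd G G') (max k k')) :=
  stmt14_general G G'
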